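/- arXiv:math/0612366 — 2 statements merged into one kernel-verified Lean document; each statement's English description precedes it below -/
import Mathlib

section
/- Let A ⊆ M^k be definable in an o-minimal structure, X = Sp(A), and C ⊆ X type-definable (closed in the Stone topology). Then the closure of C in the spectral topology equals the union over x ∈ C of the closures of the singletons {x}. -/
open FirstOrder Set Classical

/-- `Defin L M s` : the set `s ⊆ Mᵏ` is definable in the structure `M` with parameters from `M`. -/
def Defin (L : FirstOrder.Language) (M : Type) [L.Structure M] {k : ℕ}
    (s : Set (Fin k → M)) : Prop :=
  Set.Definable (Set.univ : Set M) L s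

/-- `M` is an o-minimal structure: the order is definable, and every definable subset of `M`
is a finite union of points and open intervals (possibly unbounded). -/
def IsOMin (L : FirstOrder.Language) (M : Type) [L.Structure M] [LinearOrder M] : Prop :=
  Set.Definable (Set.univ : Set M) L {p : Fin 2 → M | p 0 < p 1} ∧
  ∀ s : Set (Fin 1 → M), Defin L M s →
    ∃ (F : Finset M) (n : ℕ) (J : Fin n → Set M),
      (∀ i, (∃ a b, J i = Set.Ioo a b) ∨ (∃ a, J i = Set.Ioi a) ∨
            (∃ b, J i = Set.Iio b) ∨ J i = Set.univ) ∧
      (fun p : Fin 1 → M => p 0) '' s = ↑F ∪ ⋃ i, J i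

/-- `M` expands an ordered group: the graph of addition is definable. -/
def ExpandsGroup (L : FirstOrder.Language) (M : Type) [L.Structure M] [Add M] : Prop :=
  Set.Definable (Set.univ : Set M) L {p : Fin 3 → M | p 0 + p 1 = p 2}

/-- `M` expands a (real closed, by o-minimality) field: graphs of `+` and `*` are definable. -/
def ExpandsField (L : FirstOrder.Language) (M : Type) [L.Structure M] [Add M] [Mul M] : Prop :=
  Set.Definable (Set.univ : Set M) L {p : Fin 3 → M | p 0 + p 1 = p 2} ∧
  Set.Definable (Set.univ : Set M) L {p : Fin 3 → M | p 0 * p 1 = p 2}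

/-- o-minimal dimension of a subset of `Mᵏ` : the largest `d` such that some coordinate
projection onto `M^d` has nonempty interior; `-1` for the empty set. -/

noncomputable def odim {M : Type} [TopologicalSpace M] {k : ℕ} (s : Set (Fin k → M)) : ℤ :=
  if s.Nonempty then
    ((sSup {d : ℕ | ∃ f : Fin d → Fin k, Function.Injective f ∧
      (interior ((fun x : Fin k → M => x ∘ f) '' s)).Nonempty} : ℕ) : ℤ)
  else -1

/-- A point of the o-minimal spectrum `Sp A`: a complete type over `M` concentrated on `A`,
presented as an ultrafilter on the Boolean algebra of definable subsets of `A`. -/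
structure OType (L : FirstOrder.Language) (M : Type) [L.Structure M] {k : ℕ}
    (A : Set (Fin k → M)) where
  sets : Set (Set (Fin k → M))
  definable_mem : ∀ s ∈ sets, Defin L M s
  subset_mem : ∀ s ∈ sets, s ⊆ A
  top_mem : A ∈ sets
  nonempty_mem : ∀ s ∈ sets, s.Nonempty
  inter_mem : ∀ s ∈ sets, ∀ t ∈ sets, s ∩ t ∈ sets
  complete : ∀ s : Set (Fin k → M), Defin L M s → s ⊆ A → (s ∈ sets ∨ A \ s ∈ sets)

/-- The spectral topology on `Sp A`, generated by the sets `Sp U` for `U` open definable. -/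
instance OType.topology (L : FirstOrder.Language) (M : Type) [L.Structure M] [TopologicalSpace M]
    {k : ℕ} (A : Set (Fin k → M)) : TopologicalSpace (OType L M A) :=
  TopologicalSpace.generateFrom
    {V | ∃ U : Set (Fin k → M), IsOpen U ∧ Defin L M U ∧
      V = {x : OType L M A | U ∩ A ∈ x.sets}}

/-- The dimension of a type: the minimal dimension of a definable set on which it concentrates. -/
noncomputable def OType.tdim {L : FirstOrder.Language} {M : Type} [L.Structure M]
    [TopologicalSpace M] {k : ℕ} {A : Set (Fin k → M)} (x : OType L M A) : ℤ :=
  sInf {d : ℤ | ∃ s ∈ x.sets, odim s = d}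

/-- `C ⊆ Sp A` is type-definable iff it is an intersection of sets `Sp D`, `D ⊆ A`
definable (equivalently, closed in the Stone topology). -/
def TypeDef (L : FirstOrder.Language) (M : Type) [L.Structure M] {k : ℕ}
    {A : Set (Fin k → M)} (C : Set (OType L M A)) : Prop :=
  ∃ I : Set (Set (Fin k → M)), (∀ D ∈ I, Defin L M D ∧ D ⊆ A) ∧
    C = ⋂ D ∈ I, {x : OType L M A | D ∈ x.sets}

/-!
Types over `M` concentrated on `A` are exactly the definable traces of ultrafilters on `Mᵏ`
containing `A`; this is the compactness of the Stone topology. If `y` lies in the spectral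
closure of `C = ⋂ D ∈ I, Sp D`, every basic spectral neighbourhood `Sp (U ∩ A)` of `y`
meets `C`, and these neighbourhoods are closed under finite intersections. Hence the sets
`D ∈ I` and the sets `U ∩ A ∈ y` together have the finite intersection property, and an
ultrafilter containing all of them is a type `x ∈ C` lying in every spectral neighbourhood
of `y`, i.e. `x ⤳ y`.
-/

open scoped Filter

namespace OType

variable {L : FirstOrder.Language} {M : Type} [L.Structure M] {k : ℕ} {A : Set (Fin k → M)}

def toFilter (z : OType L M A) : Filter (Fin k → M) where
  sets := {s | ∃ t ∈ z.sets, t ⊆ s}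
  univ_sets := ⟨A, z.top_mem, subset_univ A⟩
  sets_of_superset := fun ⟨t, ht, hts⟩ hss' => ⟨t, ht, hts.trans hss'⟩
  inter_sets := fun ⟨t, ht, hts⟩ ⟨t', ht', hts'⟩ =>
    ⟨t ∩ t', z.inter_mem t ht t' ht', inter_subset_inter hts hts'⟩

theorem mem_toFilter_of_mem {z : OType L M A} {s : Set (Fin k → M)} (hs : s ∈ z.sets) :
    s ∈ z.toFilter :=
  ⟨s, hs, subset_rfl⟩

instance (z : OType L M A) : z.toFilter.NeBot :=
  Filter.forall_mem_nonempty_iff_neBot.mp fun _ ⟨t, ht, hts⟩ => (z.nonempty_mem t ht).mono hts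

theorem toFilter_le_iInf_principal {I : Set (Set (Fin k → M))} {z : OType L M A}
    (hz : z ∈ ⋂ D ∈ I, {x : OType L M A | D ∈ x.sets}) : z.toFilter ≤ ⨅ D ∈ I, 𝓟 D :=
  le_iInf₂ fun D hD => Filter.le_principal_iff.mpr (mem_toFilter_of_mem (mem_iInter₂.mp hz D hD))

def ofUltrafilter (𝒰 : Ultrafilter (Fin k → M)) (hA : Defin L M A) (hA𝒰 : A ∈ 𝒰) :
    OType L M A where
  sets := {s | Defin L M s ∧ s ⊆ A ∧ s ∈ 𝒰}
  definable_mem := fun _ hs => hs.1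
  subset_mem := fun _ hs => hs.2.1
  top_mem := ⟨hA, subset_rfl, hA𝒰⟩
  nonempty_mem := fun _ hs => Ultrafilter.nonempty_of_mem hs.2.2
  inter_mem := fun _ hs _ ht =>
    ⟨hs.1.inter ht.1, inter_subset_left.trans hs.2.1, Filter.inter_mem hs.2.2 ht.2.2⟩
  complete := fun s hs hsA => (𝒰.mem_or_compl_mem s).imp (fun h => ⟨hs, hsA, h⟩)
    fun h => ⟨hA.sdiff hs, sdiff_subset, Filter.inter_mem hA𝒰 h⟩

section Spectral

variable [TopologicalSpace M]

theorem isOpen_setOf_inter_mem {U : Set (Fin k → M)} (hU : IsOpen U) (hUd : Defin L M U) :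
    IsOpen {x : OType L M A | U ∩ A ∈ x.sets} :=
  TopologicalSpace.isOpen_generateFrom_of_mem ⟨U, hU, hUd, rfl⟩

theorem specializes_of_forall {x y : OType L M A}
    (h : ∀ U, IsOpen U → Defin L M U → U ∩ A ∈ y.sets → U ∩ A ∈ x.sets) : x ⤳ y := by
  simp_rw [Specializes, TopologicalSpace.nhds_generateFrom, le_iInf₂_iff]
  rintro _ ⟨hy, U, hU, hUd, rfl⟩
  exact iInf₂_le _ ⟨h U hU hUd hy, U, hU, hUd, rfl⟩

/-- The trace on `Mᵏ` of the spectral neighbourhood filter of `y`. -/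
def spectralNhds (y : OType L M A) : Filter (Fin k → M) where
  sets := {s | ∃ U, IsOpen U ∧ Defin L M U ∧ U ∩ A ∈ y.sets ∧ U ∩ A ⊆ s}
  univ_sets := ⟨univ, isOpen_univ, Set.definable_univ, by simpa using y.top_mem, subset_univ _⟩
  sets_of_superset := fun ⟨U, hU, hUd, hUy, hUs⟩ hss' => ⟨U, hU, hUd, hUy, hUs.trans hss'⟩
  inter_sets := fun ⟨U, hU, hUd, hUy, hUs⟩ ⟨U', hU', hUd', hUy', hUs'⟩ =>
    ⟨U ∩ U', hU.inter hU', hUd.inter hUd',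
      (inter_inter_distrib_right U U' A).symm ▸ y.inter_mem _ hUy _ hUy',
      fun _ ⟨⟨hxU, hxU'⟩, hxA⟩ => ⟨hUs ⟨hxU, hxA⟩, hUs' ⟨hxU', hxA⟩⟩⟩

theorem inter_mem_spectralNhds {y : OType L M A} {U : Set (Fin k → M)} (hU : IsOpen U)
    (hUd : Defin L M U) (hUy : U ∩ A ∈ y.sets) : U ∩ A ∈ y.spectralNhds :=
  ⟨U, hU, hUd, hUy, subset_rfl⟩

theorem self_mem_spectralNhds (y : OType L M A) : A ∈ y.spectralNhds := by
  simpa using inter_mem_spectralNhds isOpen_univ Set.definable_univ (by simpa using y.top_mem)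

theorem ofUltrafilter_specializes (hA : Defin L M A) {𝒰 : Ultrafilter (Fin k → M)}
    (hA𝒰 : A ∈ 𝒰) {y : OType L M A} (h𝒰 : ↑𝒰 ≤ y.spectralNhds) :
    ofUltrafilter 𝒰 hA hA𝒰 ⤳ y :=
  specializes_of_forall fun _ hU hUd hUy =>
    ⟨hUd.inter hA, inter_subset_right, h𝒰 (inter_mem_spectralNhds hU hUd hUy)⟩

theorem spectralNhds_inf_neBot_of_mem_closure {I : Set (Set (Fin k → M))} {y : OType L M A}
    (hy : y ∈ closure (⋂ D ∈ I, {x : OType L M A | D ∈ x.sets})) :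
    (y.spectralNhds ⊓ ⨅ D ∈ I, 𝓟 D).NeBot := by
  refine Filter.inf_neBot_iff.mpr fun s ⟨U, hU, hUd, hUy, hUs⟩ t ht => ?_
  obtain ⟨z, hzU, hzC⟩ := mem_closure_iff.mp hy _ (isOpen_setOf_inter_mem hU hUd) hUy
  have hs : s ∈ z.toFilter := Filter.mem_of_superset (mem_toFilter_of_mem hzU) hUs
  exact Filter.nonempty_of_mem (Filter.inter_mem hs (toFilter_le_iInf_principal hzC ht))

theorem exists_mem_specializes_of_mem_closure (hA : Defin L M A) {C : Set (OType L M A)}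
    (hC : TypeDef L M C) {y : OType L M A} (hy : y ∈ closure C) : ∃ x ∈ C, x ⤳ y := by
  obtain ⟨I, hI, rfl⟩ := hC
  have := spectralNhds_inf_neBot_of_mem_closure hy
  obtain ⟨𝒰, h𝒰⟩ := Ultrafilter.exists_le (y.spectralNhds ⊓ ⨅ D ∈ I, 𝓟 D)
  have hA𝒰 : A ∈ 𝒰 := h𝒰 (Filter.mem_inf_of_left y.self_mem_spectralNhds)
  refine ⟨ofUltrafilter 𝒰 hA hA𝒰, mem_iInter₂.mpr fun D hD => ?_,
    ofUltrafilter_specializes hA hA𝒰 (h𝒰.trans inf_le_left)⟩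
  refine ⟨(hI D hD).1, (hI D hD).2, ?_⟩
  exact Filter.le_principal_iff.mp (h𝒰.trans (inf_le_right.trans (iInf₂_le D hD)))

end Spectral

end OType

theorem stmt14_general {L : FirstOrder.Language} {M : Type} [L.Structure M]
    [TopologicalSpace M]
    {k : ℕ} (A : Set (Fin k → M)) (hA : Defin L M A)
    (C : Set (OType L M A)) (hC : TypeDef L M C) :
    closure C = ⋃ x ∈ C, closure ({x} : Set (OType L M A)) := by
  refine Subset.antisymm (fun y hy => ?_) (iUnion₂_subset fun x hx => ?_)
  · obtain ⟨x, hxC, hxy⟩ := OType.exists_mem_specializes_of_mem_closure hA hC hy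
    exact mem_iUnion₂.mpr ⟨x, hxC, specializes_iff_mem_closure.mp hxy⟩
  · exact closure_mono (singleton_subset_iff.mpr hx)

/-- For `A ⊆ Mᵏ` definable in an o-minimal structure `M` expanding an ordered group and
`C ⊆ Sp A` type-definable, the spectral closure of `C` is the union of the closures of the
singletons `{x}`, `x ∈ C`. -/
theorem stmt14 {L : FirstOrder.Language} {M : Type} [L.Structure M]
    [AddCommGroup M] [LinearOrder M] [IsOrderedAddMonoid M] [TopologicalSpace M] [OrderTopology M]
    (hmin : IsOMin L M) (hgrp : ExpandsGroup L M)
    {k : ℕ} (A : Set (Fin k → M)) (hA : Defin L M A)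
    (C : Set (OType L M A)) (hC : TypeDef L M C) :
    closure C = ⋃ x ∈ C, closure ({x} : Set (OType L M A)) :=
  stmt14_general A hA C hC
end

section
/- Let M be an o-minimal expansion of a real closed field, A ⊆ M^k definable and locally definably compact, and ρ : A → C a definable compactification of A (C definably compact, ρ a definable homeomorphism onto its image, ρ(A) dense in C). Then ρ(A) is open in C. Conversely, if ρ(A) is open in C then A is locally definably compact. -/
open FirstOrder Set Classical

/-- `A ⊆ Mᵏ` is locally definably compact: every point of `A` has a definably compact
(definable, closed, bounded) neighborhood in `A`. -/
def LocallyDefCompact (L : FirstOrder.Language) (M : Type) [L.Structure M] [LinearOrder M]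
    [Neg M] [TopologicalSpace M] {k : ℕ} (A : Set (Fin k → M)) : Prop :=
  ∀ a ∈ A, ∃ K : Set (Fin k → M), Defin L M K ∧ K ⊆ A ∧ IsClosed K ∧
    (∃ r : M, ∀ p ∈ K, ∀ i, -r ≤ p i ∧ p i ≤ r) ∧
    ∃ U : Set (Fin k → M), IsOpen U ∧ a ∈ U ∧ U ∩ A ⊆ K

/-!
Everything rests on the o-minimal fact that a continuous definable image of a definably compact
(definable, closed and bounded) set is again definably compact. Closedness of projections comes
from o-minimal completeness: definable sets that are bounded above have suprema. An image is
bounded because, after compressing a coordinate `y` to `y ^ 2 / (1 + y ^ 2) < 1`, the compressed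
values form a definably compact subset of `M`; their maximum is attained, hence below `1`, and
this bounds `y`.

If `K` is a definably compact neighbourhood of `a` in `A`, then `ρ(K)` is closed, so the points
of `C` near `ρ(a)`, which are limits of points of `ρ(A)` near `ρ(a)`, lie in `ρ(K) ⊆ ρ(A)`.
Conversely, if `ρ(A)` is open in `C`, a small closed box around `ρ(a)` meets `C` in a definably compact
subset of `ρ(A)`, and its preimage under `ρ` is the image under the inverse of `ρ`, which is
continuous because `ρ` is a homeomorphism onto its image.
-/

open Filter Topology

@[simp]
lemma Fin.append_comp_castAdd {α : Type*} {n m : ℕ} (u : Fin n → α) (v : Fin m → α) :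
    Fin.append u v ∘ Fin.castAdd m = u :=
  funext (Fin.append_left u v)

@[simp]
lemma Fin.append_comp_natAdd {α : Type*} {n m : ℕ} (u : Fin n → α) (v : Fin m → α) :
    Fin.append u v ∘ Fin.natAdd n = v :=
  funext (Fin.append_right u v)

lemma Fin.comp_append {α β : Type*} {n m : ℕ} (g : α → β) (u : Fin n → α) (v : Fin m → α) :
    g ∘ Fin.append u v = Fin.append (g ∘ u) (g ∘ v) := by
  ext i
  induction i using Fin.addCases <;> simp

namespace Defin

variable {L : FirstOrder.Language} {M : Type} [L.Structure M] {n m : ℕ}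

lemma inter {S T : Set (Fin n → M)} (hS : Defin L M S) (hT : Defin L M T) :
    Defin L M (S ∩ T) := Set.Definable.inter hS hT

lemma union {S T : Set (Fin n → M)} (hS : Defin L M S) (hT : Defin L M T) :
    Defin L M (S ∪ T) := Set.Definable.union hS hT

lemma compl {S : Set (Fin n → M)} (hS : Defin L M S) : Defin L M Sᶜ :=
  Set.Definable.compl hS

lemma iInter {S : Fin m → Set (Fin n → M)} (hS : ∀ i, Defin L M (S i)) :
    Defin L M (⋂ i, S i) := by
  simpa [Defin] using Set.definable_biInter_finset (A := (univ : Set M)) hS Finset.univ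

lemma preimage_comp (f : Fin n → Fin m) {S : Set (Fin n → M)} (hS : Defin L M S) :
    Defin L M {p : Fin m → M | p ∘ f ∈ S} :=
  Set.Definable.preimage_comp f hS

lemma image_comp (f : Fin n → Fin m) {S : Set (Fin m → M)} (hS : Defin L M S) :
    Defin L M ((fun p : Fin m → M => p ∘ f) '' S) :=
  Set.Definable.image_comp hS f

lemma exists_append {S : Set (Fin (n + m) → M)} (hS : Defin L M S) :
    Defin L M {p : Fin n → M | ∃ x : Fin m → M, Fin.append p x ∈ S} := by
  convert hS.image_comp (Fin.castAdd m) using 1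
  ext p
  constructor
  · rintro ⟨x, hx⟩
    exact ⟨_, hx, Fin.append_comp_castAdd p x⟩
  · rintro ⟨q, hq, rfl⟩
    exact ⟨q ∘ Fin.natAdd n, by convert hq using 1; exact Fin.append_castAdd_natAdd⟩

lemma forall_append {S : Set (Fin (n + m) → M)} (hS : Defin L M S) :
    Defin L M {p : Fin n → M | ∀ x : Fin m → M, Fin.append p x ∈ S} := by
  convert hS.compl.exists_append.compl using 1
  ext p
  simp

lemma eq_const (i : Fin n) (c : M) : Defin L M {p : Fin n → M | p i = c} :=
  ⟨(Language.Term.var i).equal (L.con (⟨c, mem_univ c⟩ : (univ : Set M))).term, by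
    ext p
    simp⟩

lemma append_const (c : Fin m → M) {S : Set (Fin (n + m) → M)} (hS : Defin L M S) :
    Defin L M {p : Fin n → M | Fin.append p c ∈ S} := by
  convert (hS.inter (iInter fun j => eq_const (Fin.natAdd n j) (c j))).exists_append using 1
  ext p
  simp only [mem_ofPred_eq, mem_inter_iff, mem_iInter, Fin.append_right]
  exact ⟨fun h => ⟨c, h, fun _ => rfl⟩, fun ⟨x, hx, hxc⟩ => funext hxc ▸ hx⟩

end Defin

section OrderAtoms

variable {L : FirstOrder.Language} {M : Type} [L.Structure M] [LinearOrder M] {n : ℕ}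

lemma Defin.lt (hlt : Defin L M {p : Fin 2 → M | p 0 < p 1}) (i j : Fin n) :
    Defin L M {p : Fin n → M | p i < p j} :=
  hlt.preimage_comp ![i, j]

lemma Defin.le (hlt : Defin L M {p : Fin 2 → M | p 0 < p 1}) (i j : Fin n) :
    Defin L M {p : Fin n → M | p i ≤ p j} := by
  convert (Defin.lt hlt j i).compl using 1
  ext
  simp

lemma Defin.lt_const (hlt : Defin L M {p : Fin 2 → M | p 0 < p 1}) (i : Fin n) (c : M) :
    Defin L M {p : Fin n → M | p i < c} := by
  simpa using (Defin.lt hlt (Fin.castAdd 1 i) (Fin.natAdd n 0)).append_const ![c]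

lemma Defin.const_lt (hlt : Defin L M {p : Fin 2 → M | p 0 < p 1}) (c : M) (i : Fin n) :
    Defin L M {p : Fin n → M | c < p i} := by
  simpa using (Defin.lt hlt (Fin.natAdd n 0) (Fin.castAdd 1 i)).append_const ![c]

lemma Defin.Icc (hlt : Defin L M {p : Fin 2 → M | p 0 < p 1}) (a b : Fin n → M) :
    Defin L M (Icc a b) := by
  convert Defin.iInter fun i => (Defin.lt_const hlt i (a i)).compl.inter
    (Defin.const_lt hlt (b i) i).compl using 1
  ext p
  simp [Pi.le_def, forall_and]

lemma Defin.setOf_lowerBound_last_near (hlt : Defin L M {p : Fin 2 → M | p 0 < p 1})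
    {S : Set (Fin (n + 1) → M)} (hS : Defin L M S) (c : Fin n → M) :
    Defin L M {p : Fin 1 → M | ∃ a b : Fin n → M, (∀ i, a i < c i ∧ c i < b i) ∧
      ∀ w ∈ S, (∀ i, a i < w i.castSucc ∧ w i.castSucc < b i) → p 0 ≤ w (Fin.last n)} := by
  let a (i : Fin n) : Fin ((1 + n) + n) := Fin.castAdd n (Fin.natAdd 1 i)
  let b (i : Fin n) : Fin ((1 + n) + n) := Fin.natAdd (1 + n) i
  let w (j : Fin (n + 1)) : Fin (((1 + n) + n) + (n + 1)) := Fin.natAdd _ j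
  let lift (i : Fin ((1 + n) + n)) : Fin (((1 + n) + n) + (n + 1)) := Fin.castAdd _ i
  have hbound := ((hS.preimage_comp w).compl.union
    (Defin.iInter fun i => (Defin.lt hlt (w i.castSucc) (lift (b i))).inter
      (Defin.lt hlt (lift (a i)) (w i.castSucc))).compl).union
    (Defin.le hlt (lift (Fin.castAdd n (Fin.castAdd n 0))) (w (Fin.last n)))
  have hbox := Defin.iInter fun i => (Defin.lt_const hlt (a i) (c i)).inter
    (Defin.const_lt hlt (c i) (b i))
  convert (hbound.forall_append.inter hbox).exists_append.exists_append using 1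
  ext p
  simp [a, b, w, lift, -Fin.natAdd_last, imp_iff_not_or, or_assoc, and_comm, or_comm]

end OrderAtoms

section FieldAtoms

variable {L : FirstOrder.Language} {M : Type} [L.Structure M] {n : ℕ}

lemma Defin.add [Add M] [Mul M] (hfld : ExpandsField L M) (i j k : Fin n) :
    Defin L M {p : Fin n → M | p i + p j = p k} :=
  Defin.preimage_comp ![i, j, k] hfld.1

lemma Defin.mul [Add M] [Mul M] (hfld : ExpandsField L M) (i j k : Fin n) :
    Defin L M {p : Fin n → M | p i * p j = p k} :=
  Defin.preimage_comp ![i, j, k] hfld.2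

lemma Defin.sq_div_one_add_sq [Field M] [LinearOrder M] [IsStrictOrderedRing M]
    (hfld : ExpandsField L M) :
    Defin L M {q : Fin 2 → M | q 0 = q 1 ^ 2 / (1 + q 1 ^ 2)} := by
  have hsq := Defin.mul hfld (Fin.castAdd 2 1) (Fin.castAdd 2 1) (Fin.natAdd 2 0)
  have hmul := Defin.mul hfld (Fin.castAdd 2 0) (Fin.natAdd 2 0) (Fin.natAdd 2 1)
  have hadd := Defin.add hfld (Fin.castAdd 2 0) (Fin.natAdd 2 1) (Fin.natAdd 2 0)
  convert ((hsq.inter hmul).inter hadd).exists_append using 1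
  ext q
  have hpos : (1 + q 1 ^ 2) ≠ 0 := by positivity
  simp only [mem_ofPred_eq, mem_inter_iff, Fin.append_left, Fin.append_right, eq_div_iff hpos]
  constructor
  · intro h
    exact ⟨![q 1 * q 1, q 0 * (q 1 * q 1)], ⟨by simp, by simp⟩, by simp; linear_combination h⟩
  · rintro ⟨x, ⟨hx0, hx1⟩, hx2⟩
    linear_combination hx2 + hx1 + (q 0 - 1) * hx0

end FieldAtoms

section OMinimal

variable {M : Type} [LinearOrder M]

lemma exists_isLUB_union {s t : Set M} (hs : s.Nonempty → ∃ m, IsLUB s m)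
    (ht : t.Nonempty → ∃ m, IsLUB t m) : (s ∪ t).Nonempty → ∃ m, IsLUB (s ∪ t) m := by
  rcases s.eq_empty_or_nonempty with rfl | hs'
  · simpa using ht
  rcases t.eq_empty_or_nonempty with rfl | ht'
  · simpa using hs
  obtain ⟨a, ha⟩ := hs hs'
  obtain ⟨b, hb⟩ := ht ht'
  exact fun _ => ⟨a ⊔ b, ha.union hb⟩

lemma exists_isLUB_biUnion {ι : Type*} (I : Finset ι) {s : ι → Set M}
    (hs : ∀ i ∈ I, (s i).Nonempty → ∃ m, IsLUB (s i) m) :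
    (⋃ i ∈ I, s i).Nonempty → ∃ m, IsLUB (⋃ i ∈ I, s i) m := by
  classical
  induction I using Finset.induction_on with
  | empty => simp
  | insert i I _ ih =>
    rw [Finset.set_biUnion_insert]
    exact exists_isLUB_union (hs i (Finset.mem_insert_self i I))
      (ih fun j hj => hs j (Finset.mem_insert_of_mem hj))

variable [DenselyOrdered M] [NoMaxOrder M]

lemma exists_isLUB_of_isInterval {J : Set M} (hJ : BddAbove J) (hne : J.Nonempty)
    (hint : (∃ a b, J = Ioo a b) ∨ (∃ a, J = Ioi a) ∨ (∃ b, J = Iio b) ∨ J = univ) :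
    ∃ m, IsLUB J m := by
  rcases hint with ⟨a, b, rfl⟩ | ⟨a, rfl⟩ | ⟨b, rfl⟩ | rfl
  · exact ⟨b, isLUB_Ioo (nonempty_Ioo.mp hne)⟩
  · exact absurd hJ (not_bddAbove_Ioi a)
  · exact ⟨b, isLUB_Iio⟩
  · exact absurd hJ not_bddAbove_univ

lemma exists_isLUB_of_defin {L : FirstOrder.Language} [L.Structure M] (hmin : IsOMin L M)
    {s : Set M} (hs : Defin L M {p : Fin 1 → M | p 0 ∈ s}) (hne : s.Nonempty)
    (hbdd : BddAbove s) : ∃ m, IsLUB s m := by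
  obtain ⟨F, n, J, hJ, hsJ⟩ := hmin.2 _ hs
  have himage : (fun p : Fin 1 → M => p 0) '' {p | p 0 ∈ s} = s :=
    Set.ext fun u => ⟨by rintro ⟨p, hp, rfl⟩; exact hp, fun hu => ⟨fun _ => u, hu, rfl⟩⟩
  rw [himage] at hsJ
  have hJs : ∀ i, J i ⊆ s := fun i => hsJ ▸ subset_union_of_subset_right (subset_iUnion J i) _
  rw [hsJ] at hne ⊢
  refine exists_isLUB_union (fun hF => ⟨_, (F.isGreatest_max' (Finset.coe_nonempty.mp hF)).isLUB⟩)
    ?_ hne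
  simpa using exists_isLUB_biUnion Finset.univ (s := J)
    fun i _ hi => exists_isLUB_of_isInterval (hbdd.mono (hJs i)) hi (hJ i)

end OMinimal

lemma exists_pi_Ioo_subset {M : Type} [LinearOrder M] [TopologicalSpace M] [OrderTopology M]
    [NoMaxOrder M] [NoMinOrder M] {ι : Type*} [Finite ι] {x : ι → M} {O : Set (ι → M)}
    (hO : O ∈ 𝓝 x) : ∃ a b : ι → M, (∀ i, a i < x i) ∧ (∀ i, x i < b i) ∧
      univ.pi (fun i => Ioo (a i) (b i)) ⊆ O := by
  rw [nhds_pi, Filter.mem_pi'] at hO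
  obtain ⟨I, t, ht, hIt⟩ := hO
  choose a b hab hsub using fun i => mem_nhds_iff_exists_Ioo_subset.mp (ht i)
  exact ⟨a, b, fun i => (hab i).1, fun i => (hab i).2,
    fun y hy => hIt fun i _ => hsub i (hy i trivial)⟩

lemma exists_Icc_subset_of_mem_nhds {M : Type} [LinearOrder M] [TopologicalSpace M]
    [OrderTopology M] [DenselyOrdered M] [NoMaxOrder M] [NoMinOrder M] {n : ℕ}
    {x : Fin n → M} {V : Set (Fin n → M)} (hV : V ∈ 𝓝 x) :
    ∃ a b : Fin n → M, (∀ i, a i < x i) ∧ (∀ i, x i < b i) ∧ Icc a b ⊆ V := by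
  obtain ⟨a, b, ha, hb, hab⟩ := exists_pi_Ioo_subset hV
  choose a' ha' using fun i => exists_between (ha i)
  choose b' hb' using fun i => exists_between (hb i)
  exact ⟨a', b', fun i => (ha' i).2, fun i => (hb' i).1, fun y hy =>
    hab fun i _ => ⟨(ha' i).1.trans_le (hy.1 i), (hy.2 i).trans_lt (hb' i).2⟩⟩

section Projection

variable {L : FirstOrder.Language} {M : Type} [L.Structure M] [LinearOrder M]
  [TopologicalSpace M] [OrderTopology M] [DenselyOrdered M] [NoMaxOrder M] [NoMinOrder M]

/- The missing coordinate of a limit point `c` is the supremum of the `u` that bound the last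
coordinate of `S` from below over some box around `c`. -/
lemma isClosed_image_init (hmin : IsOMin L M) {n : ℕ} {S : Set (Fin (n + 1) → M)}
    (hS : Defin L M S) (hcl : IsClosed S) (hbddAbove : BddAbove ((· (Fin.last n)) '' S))
    (hbddBelow : BddBelow ((· (Fin.last n)) '' S)) : IsClosed (Fin.init '' S) := by
  refine isClosed_of_closure_subset fun c hc => ?_
  set W := {u : M | ∃ a b : Fin n → M, (∀ i, a i < c i ∧ c i < b i) ∧
      ∀ w ∈ S, (∀ i, a i < w i.castSucc ∧ w i.castSucc < b i) → u ≤ w (Fin.last n)} with hW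
  have hbox_meets : ∀ a b : Fin n → M, (∀ i, a i < c i ∧ c i < b i) →
      ∃ w ∈ S, ∀ i, a i < w i.castSucc ∧ w i.castSucc < b i := by
    intro a b hab
    obtain ⟨_, hbox, w, hw, rfl⟩ := mem_closure_iff_nhds.mp hc _
      (set_pi_mem_nhds finite_univ fun i _ => Ioo_mem_nhds (hab i).1 (hab i).2)
    exact ⟨w, hw, fun i => hbox i trivial⟩
  have hWne : W.Nonempty := by
    obtain ⟨r, hr⟩ := hbddBelow
    choose a ha using fun i => exists_lt (c i)
    choose b hb using fun i => exists_gt (c i)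
    exact ⟨r, a, b, fun i => ⟨ha i, hb i⟩, fun w hw _ => hr ⟨w, hw, rfl⟩⟩
  have hWbdd : BddAbove W := by
    obtain ⟨r, hr⟩ := hbddAbove
    refine ⟨r, fun u ⟨a, b, hab, hu⟩ => ?_⟩
    obtain ⟨w, hw, hwab⟩ := hbox_meets a b hab
    exact (hu w hw hwab).trans (hr ⟨w, hw, rfl⟩)
  obtain ⟨xs, hxs⟩ :=
    exists_isLUB_of_defin hmin (Defin.setOf_lowerBound_last_near hmin.1 hS c) hWne hWbdd
  refine ⟨Fin.snoc c xs, hcl.closure_subset (mem_closure_iff_nhds.mpr fun O hO => ?_),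
    by simp⟩
  obtain ⟨a, b, ha, hb, hab⟩ := exists_pi_Ioo_subset hO
  have ha_last : a (Fin.last n) < xs := by simpa using ha (Fin.last n)
  have hb_last : xs < b (Fin.last n) := by simpa using hb (Fin.last n)
  obtain ⟨v, ⟨a₁, b₁, hc₁, hv⟩, hav, -⟩ := hxs.exists_between ha_last
  have hbW : b (Fin.last n) ∉ W := fun h => hb_last.not_ge (hxs.1 h)
  simp only [hW, mem_ofPred_eq, not_exists, not_and, not_forall, not_le] at hbW
  obtain ⟨w, hwS, hw, hwb⟩ := hbW (Fin.init a ⊔ a₁) (Fin.init b ⊓ b₁) fun i => by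
    simp only [Pi.sup_apply, Pi.inf_apply, sup_lt_iff, lt_inf_iff, Fin.init]
    exact ⟨⟨by simpa using ha i.castSucc, (hc₁ i).1⟩, by simpa using hb i.castSucc, (hc₁ i).2⟩
  simp only [Pi.sup_apply, Pi.inf_apply, sup_lt_iff, lt_inf_iff, Fin.init] at hw
  refine ⟨w, hab fun i _ => ?_, hwS⟩
  induction i using Fin.lastCases with
  | last => exact ⟨hav.trans_le (hv w hwS fun i => ⟨(hw i).1.2, (hw i).2.2⟩), hwb⟩
  | cast j => exact ⟨(hw j).1.1, (hw j).2.1⟩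

end Projection

structure IsDefCompact (L : FirstOrder.Language) (M : Type) [L.Structure M] [Lattice M]
    [AddGroup M] [TopologicalSpace M] {n : ℕ} (S : Set (Fin n → M)) : Prop where
  defin : Defin L M S
  isClosed : IsClosed S
  bounded : ∃ r, ∀ p ∈ S, ∀ i, |p i| ≤ r

lemma IsDefCompact.image_comp_equiv {L : FirstOrder.Language} {M : Type} [L.Structure M]
    [Lattice M] [AddGroup M] [TopologicalSpace M] {n m : ℕ} (e : Fin m ≃ Fin n)
    {S : Set (Fin n → M)} (hS : IsDefCompact L M S) : IsDefCompact L M ((· ∘ e) '' S) := by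
  obtain ⟨hdef, hcl, r, hr⟩ := hS
  have himage : (· ∘ e) '' S = (· ∘ e.symm) ⁻¹' S :=
    congrFun (image_eq_preimage_of_inverse (f := (· ∘ e)) (g := (· ∘ e.symm))
      (fun p => by simp [Function.comp_assoc]) (fun q => by simp [Function.comp_assoc])) S
  refine ⟨hdef.image_comp e, ?_, r, ?_⟩
  · rw [himage]
    exact hcl.preimage (by fun_prop)
  · rintro _ ⟨p, hp, rfl⟩ i
    exact hr p hp _

section DefCompact

variable {L : FirstOrder.Language} {M : Type} [L.Structure M] [Field M] [LinearOrder M]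
  [IsStrictOrderedRing M] [TopologicalSpace M] [OrderTopology M] {n m : ℕ}

lemma IsDefCompact.image_init (hmin : IsOMin L M) {S : Set (Fin (n + 1) → M)}
    (hS : IsDefCompact L M S) : IsDefCompact L M (Fin.init '' S) := by
  obtain ⟨hdef, hcl, r, hr⟩ := hS
  refine ⟨hdef.image_comp Fin.castSucc, isClosed_image_init hmin hdef hcl ⟨r, ?_⟩ ⟨-r, ?_⟩,
    r, ?_⟩
  · rintro _ ⟨p, hp, rfl⟩
    exact (abs_le.mp (hr p hp _)).2
  · rintro _ ⟨p, hp, rfl⟩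
    exact (abs_le.mp (hr p hp _)).1
  · rintro _ ⟨p, hp, rfl⟩ i
    exact hr p hp _

lemma IsDefCompact.image_castAdd (hmin : IsOMin L M) {S : Set (Fin (n + m) → M)}
    (hS : IsDefCompact L M S) : IsDefCompact L M ((· ∘ Fin.castAdd m) '' S) := by
  induction m with
  | zero => simpa using hS
  | succ m ih =>
    have := ih (hS.image_init hmin)
    rw [image_image] at this
    exact this

lemma IsDefCompact.image_natAdd (hmin : IsOMin L M) {S : Set (Fin (n + m) → M)}
    (hS : IsDefCompact L M S) : IsDefCompact L M ((· ∘ Fin.natAdd n) '' S) := by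
  have := (hS.image_comp_equiv finAddFlip).image_castAdd hmin
  rw [image_image] at this
  convert this using 2
  ext p
  simp

end DefCompact

def tupleGraphOn {M : Type} {n m : ℕ} (f : (Fin n → M) → Fin m → M) (D : Set (Fin n → M)) :
    Set (Fin (n + m) → M) :=
  {p | p ∘ Fin.castAdd m ∈ D ∧ f (p ∘ Fin.castAdd m) = p ∘ Fin.natAdd n}

section Graph

variable {M : Type} {n m : ℕ} {f : (Fin n → M) → Fin m → M} {D : Set (Fin n → M)}

lemma append_mem_tupleGraphOn {x : Fin n → M} (hx : x ∈ D) :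
    Fin.append x (f x) ∈ tupleGraphOn f D := by
  simp [tupleGraphOn, hx]

lemma image_natAdd_tupleGraphOn : (· ∘ Fin.natAdd n) '' tupleGraphOn f D = f '' D := by
  ext y
  constructor
  · rintro ⟨p, ⟨hp, hfp⟩, rfl⟩
    exact ⟨_, hp, hfp⟩
  · rintro ⟨x, hx, rfl⟩
    exact ⟨_, append_mem_tupleGraphOn hx, by simp⟩

lemma isClosed_tupleGraphOn [TopologicalSpace M] [T2Space M] (hD : IsClosed D)
    (hf : ContinuousOn f D) : IsClosed (tupleGraphOn f D) := by
  have hD' : IsClosed {p : Fin (n + m) → M | p ∘ Fin.castAdd m ∈ D} :=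
    hD.preimage (by fun_prop)
  have hF : ContinuousOn (fun p : Fin (n + m) → M => (f (p ∘ Fin.castAdd m), p ∘ Fin.natAdd n))
      {p | p ∘ Fin.castAdd m ∈ D} :=
    (hf.comp (g := f) (f := (· ∘ Fin.castAdd m)) (by fun_prop) fun _ hp => hp).prodMk
      (by fun_prop)
  exact hF.preimage_isClosed_of_isClosed hD' isClosed_diagonal

end Graph

section GraphDefinability

variable {L : FirstOrder.Language} {M : Type} [L.Structure M] {k h : ℕ}
  {ρ : (Fin k → M) → Fin h → M}

lemma Defin.tupleGraphOn_of_graph {D : Set (Fin k → M)} (hD : Defin L M D)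
    (hρdef : Defin L M {p : Fin (k + h) → M |
      ρ (fun i => p (Fin.castAdd h i)) = fun j => p (Fin.natAdd k j)}) :
    Defin L M (tupleGraphOn ρ D) :=
  (hD.preimage_comp (Fin.castAdd h)).inter hρdef

lemma Defin.tupleGraphOn_invFunOn [Nonempty M] {A : Set (Fin k → M)} {D : Set (Fin h → M)}
    (hD : Defin L M D) (hDA : D ⊆ ρ '' A) (hA : Defin L M A) (hρinj : InjOn ρ A)
    (hρdef : Defin L M {p : Fin (k + h) → M |
      ρ (fun i => p (Fin.castAdd h i)) = fun j => p (Fin.natAdd k j)}) :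
    Defin L M (tupleGraphOn (Function.invFunOn ρ A) D) := by
  convert (hD.preimage_comp (Fin.castAdd k)).inter ((hA.preimage_comp (Fin.natAdd h)).inter
    (hρdef.preimage_comp finAddFlip)) using 1
  ext p
  simp only [tupleGraphOn, mem_ofPred_eq, mem_inter_iff, and_congr_right_iff]
  intro hp
  obtain ⟨x, hx, hxp⟩ := hDA hp
  have hflip_castAdd : (fun i => (p ∘ finAddFlip) (Fin.castAdd h i)) = p ∘ Fin.natAdd h := by
    ext; simp
  have hflip_natAdd : (fun j => (p ∘ finAddFlip) (Fin.natAdd k j)) = p ∘ Fin.castAdd k := by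
    ext; simp
  rw [hflip_castAdd, hflip_natAdd, ← hxp]
  constructor
  · rintro hσ
    rw [← hσ, hρinj.leftInvOn_invFunOn hx]
    exact ⟨hx, rfl⟩
  · rintro ⟨hA', hρ'⟩
    rw [← hρ', hρinj.leftInvOn_invFunOn hA']

end GraphDefinability

lemma abs_le_of_sq_div_one_add_sq_le {M : Type} [Field M] [LinearOrder M] [IsStrictOrderedRing M]
    {y t : M} (ht : t < 1) (h : y ^ 2 / (1 + y ^ 2) ≤ t) :
    |y| ≤ 1 / (1 - t) := by
  rw [div_le_iff₀ (by positivity)] at h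
  rw [le_div_iff₀ (by linarith)]
  nlinarith [abs_nonneg y, sq_abs y, sq_nonneg (|y| - 1)]

section GraphCompression

variable {L : FirstOrder.Language} {M : Type} [L.Structure M] [Field M] [LinearOrder M]
  [IsStrictOrderedRing M] {n m : ℕ} {f : (Fin n → M) → Fin m → M} {D : Set (Fin n → M)}

lemma Defin.tupleGraphOn_sq_div_one_add_sq (hfld : ExpandsField L M)
    (hgraph : Defin L M (tupleGraphOn f D)) (j : Fin m) :
    Defin L M (tupleGraphOn (fun x (_ : Fin 1) => f x j ^ 2 / (1 + f x j ^ 2)) D) := by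
  let σ : Fin (n + m) → Fin ((n + 1) + m) :=
    Fin.append (Fin.castAdd m ∘ Fin.castAdd 1) (Fin.natAdd (n + 1))
  convert ((hgraph.preimage_comp σ).inter ((Defin.sq_div_one_add_sq hfld).preimage_comp
    ![Fin.castAdd m (Fin.natAdd n 0), Fin.natAdd (n + 1) j])).exists_append using 1
  ext p
  simp only [tupleGraphOn, σ, mem_ofPred_eq, mem_inter_iff, Fin.comp_append,
    ← Function.comp_assoc, Fin.append_comp_castAdd, funext_iff,
    Fin.forall_fin_one, Function.comp_apply, Matrix.cons_val_zero, Matrix.cons_val_one,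
    Fin.append_left, Fin.append_right]
  constructor
  · rintro ⟨hD, h⟩
    exact ⟨_, ⟨hD, fun _ => rfl⟩, h.symm⟩
  · rintro ⟨x, ⟨hD, hx⟩, h⟩
    exact ⟨hD, by rw [h, funext hx]⟩

end GraphCompression

section DefCompactImage

variable {L : FirstOrder.Language} {M : Type} [L.Structure M] [Field M] [LinearOrder M]
  [IsStrictOrderedRing M] [TopologicalSpace M] [OrderTopology M] {n m : ℕ}
  {f : (Fin n → M) → Fin m → M} {D : Set (Fin n → M)}

lemma IsDefCompact.image_of_bounded (hmin : IsOMin L M) (hD : IsDefCompact L M D)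
    (hf : ContinuousOn f D) (hgraph : Defin L M (tupleGraphOn f D))
    (hbdd : ∃ r, ∀ x ∈ D, ∀ j, |f x j| ≤ r) : IsDefCompact L M (f '' D) := by
  obtain ⟨r, hr⟩ := hD.bounded
  obtain ⟨s, hs⟩ := hbdd
  rw [← image_natAdd_tupleGraphOn]
  refine IsDefCompact.image_natAdd hmin ⟨hgraph, isClosed_tupleGraphOn hD.isClosed hf,
    max r s, fun p ⟨hp, hfp⟩ i => ?_⟩
  induction i using Fin.addCases with
  | left i => exact (hr _ hp i).trans (le_max_left _ _)
  | right j => exact (congrFun hfp j ▸ hs _ hp j).trans (le_max_right _ _)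

lemma IsDefCompact.exists_max (hmin : IsOMin L M) {T : Set (Fin 1 → M)}
    (hT : IsDefCompact L M T) (hne : T.Nonempty) : ∃ p ∈ T, ∀ q ∈ T, q 0 ≤ p 0 := by
  have hT' : {p : Fin 1 → M | p 0 ∈ (· 0) '' T} = T := by
    ext p
    refine ⟨?_, fun hp => ⟨p, hp, rfl⟩⟩
    rintro ⟨q, hq, hqp⟩
    rwa [show q = p from funext fun i => Fin.fin_one_eq_zero i ▸ hqp] at hq
  obtain ⟨r, hr⟩ := hT.bounded
  obtain ⟨u, hu⟩ := exists_isLUB_of_defin hmin (hT' ▸ hT.defin) (hne.image _)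
    ⟨r, by rintro _ ⟨q, hq, rfl⟩; exact (abs_le.mp (hr q hq 0)).2⟩
  have hclosed : IsClosed ((· 0) '' T) :=
    (Homeomorph.funUnique (Fin 1) M).isClosedMap _ hT.isClosed
  obtain ⟨p, hp, rfl⟩ := hclosed.closure_subset (hu.mem_closure (hne.image _))
  exact ⟨p, hp, fun q hq => hu.1 ⟨q, hq, rfl⟩⟩

lemma IsDefCompact.exists_bound_coord (hmin : IsOMin L M) (hfld : ExpandsField L M)
    (hD : IsDefCompact L M D) (hf : ContinuousOn f D) (hgraph : Defin L M (tupleGraphOn f D))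
    (j : Fin m) : ∃ r, ∀ x ∈ D, |f x j| ≤ r := by
  rcases D.eq_empty_or_nonempty with rfl | hne
  · exact ⟨0, by simp⟩
  set g : (Fin n → M) → Fin 1 → M := fun x _ => f x j ^ 2 / (1 + f x j ^ 2)
  have hg_nonneg (x) : 0 ≤ g x 0 := by positivity
  have hg_lt (x) : g x 0 < 1 := by
    rw [div_lt_one (by positivity)]
    linarith
  have hg : ContinuousOn g D := by
    refine continuousOn_pi.mpr fun _ => ContinuousOn.div (by fun_prop) (by fun_prop) ?_
    intro x _
    positivity
  have hgD : IsDefCompact L M (g '' D) :=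
    hD.image_of_bounded hmin hg (Defin.tupleGraphOn_sq_div_one_add_sq hfld hgraph j)
      ⟨1, fun x _ _ => abs_le.mpr ⟨by linarith [hg_nonneg x], (hg_lt x).le⟩⟩
  obtain ⟨_, ⟨x₀, -, rfl⟩, hmax⟩ := hgD.exists_max hmin (hne.image g)
  exact ⟨1 / (1 - g x₀ 0), fun x hx =>
    abs_le_of_sq_div_one_add_sq_le (hg_lt x₀) (hmax (g x) ⟨x, hx, rfl⟩)⟩

lemma IsDefCompact.image (hmin : IsOMin L M) (hfld : ExpandsField L M)
    (hD : IsDefCompact L M D) (hf : ContinuousOn f D) (hgraph : Defin L M (tupleGraphOn f D)) :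
    IsDefCompact L M (f '' D) := by
  choose r hr using hD.exists_bound_coord hmin hfld hf hgraph
  obtain ⟨R, hR⟩ := (finite_range r).bddAbove
  exact hD.image_of_bounded hmin hf hgraph
    ⟨R, fun x hx j => (hr j x hx).trans (hR (mem_range_self j))⟩

end DefCompactImage

lemma continuousOn_invFunOn_image {X Y : Type*} [TopologicalSpace X] [TopologicalSpace Y]
    [Nonempty X] {ρ : X → Y} {A : Set X} (hinj : InjOn ρ A)
    (hopen : ∀ U : Set X, IsOpen U → ∃ V : Set Y, IsOpen V ∧ ρ '' (U ∩ A) = V ∩ ρ '' A) :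
    ContinuousOn (Function.invFunOn ρ A) (ρ '' A) := by
  refine continuousOn_iff'.mpr fun U hU => ?_
  obtain ⟨V, hV, hVeq⟩ := hopen U hU
  refine ⟨V, hV, hVeq ▸ ?_⟩
  ext y
  constructor
  · rintro ⟨hy, x, hx, rfl⟩
    rw [mem_preimage, hinj.leftInvOn_invFunOn hx] at hy
    exact ⟨x, ⟨hy, hx⟩, rfl⟩
  · rintro ⟨x, ⟨hxU, hxA⟩, rfl⟩
    exact ⟨by rwa [mem_preimage, hinj.leftInvOn_invFunOn hxA], x, hxA, rfl⟩

section Compactification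

variable {L : FirstOrder.Language} {M : Type} [L.Structure M] [Field M] [LinearOrder M]
  [IsStrictOrderedRing M] [TopologicalSpace M] [OrderTopology M] {k h : ℕ}
  {A : Set (Fin k → M)} {C : Set (Fin h → M)} {ρ : (Fin k → M) → Fin h → M}

lemma exists_isOpen_image_eq_inter_of_locallyDefCompact (hmin : IsOMin L M)
    (hfld : ExpandsField L M)
    (hρdef : Defin L M {p : Fin (k + h) → M |
      ρ (fun i => p (Fin.castAdd h i)) = fun j => p (Fin.natAdd k j)})
    (hρcont : ContinuousOn ρ A)
    (hρopen : ∀ U : Set (Fin k → M), IsOpen U →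
      ∃ V : Set (Fin h → M), IsOpen V ∧ ρ '' (U ∩ A) = V ∩ (ρ '' A))
    (hρC : ρ '' A ⊆ C) (hdense : C ⊆ closure (ρ '' A)) (hA : LocallyDefCompact L M A) :
    ∃ V : Set (Fin h → M), IsOpen V ∧ ρ '' A = V ∩ C := by
  have hlocal : ∀ a ∈ A, ∃ V, IsOpen V ∧ ρ a ∈ V ∧ V ∩ C ⊆ ρ '' A := by
    intro a ha
    obtain ⟨K, hKdef, hKA, hKcl, ⟨r, hr⟩, U, hU, haU, hUK⟩ := hA a ha
    have hK : IsDefCompact L M K := ⟨hKdef, hKcl, r, fun p hp i => abs_le.mpr (hr p hp i)⟩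
    have hρK : IsClosed (ρ '' K) :=
      (hK.image hmin hfld (hρcont.mono hKA) (hKdef.tupleGraphOn_of_graph hρdef)).isClosed
    obtain ⟨V, hV, hVeq⟩ := hρopen U hU
    have haV : ρ a ∈ V ∩ ρ '' A := hVeq ▸ ⟨a, ⟨haU, ha⟩, rfl⟩
    refine ⟨V, hV, haV.1, ?_⟩
    calc V ∩ C ⊆ closure (V ∩ ρ '' A) := (inter_subset_inter_right V hdense).trans hV.inter_closure
      _ = closure (ρ '' (U ∩ A)) := by rw [hVeq]
      _ ⊆ ρ '' K := hρK.closure_subset_iff.mpr (image_mono hUK)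
      _ ⊆ ρ '' A := image_mono hKA
  choose! V hV haV hVC using hlocal
  refine ⟨⋃ a ∈ A, V a, isOpen_biUnion hV, subset_antisymm ?_ ?_⟩
  · rintro _ ⟨a, ha, rfl⟩
    exact ⟨mem_biUnion ha (haV a ha), hρC ⟨a, ha, rfl⟩⟩
  · rintro y ⟨hy, hyC⟩
    obtain ⟨a, ha, hya⟩ := mem_iUnion₂.mp hy
    exact hVC a ha ⟨hya, hyC⟩

lemma locallyDefCompact_of_image_eq_inter (hmin : IsOMin L M) (hfld : ExpandsField L M)
    (hA : Defin L M A) (hC : Defin L M C) (hCcl : IsClosed C)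
    (hCbd : ∃ r : M, ∀ p ∈ C, ∀ i, |p i| ≤ r)
    (hρdef : Defin L M {p : Fin (k + h) → M |
      ρ (fun i => p (Fin.castAdd h i)) = fun j => p (Fin.natAdd k j)})
    (hρcont : ContinuousOn ρ A) (hρinj : InjOn ρ A)
    (hρopen : ∀ U : Set (Fin k → M), IsOpen U →
      ∃ V : Set (Fin h → M), IsOpen V ∧ ρ '' (U ∩ A) = V ∩ (ρ '' A))
    (hρC : ρ '' A ⊆ C) {V : Set (Fin h → M)} (hV : IsOpen V) (hVeq : ρ '' A = V ∩ C) :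
    LocallyDefCompact L M A := by
  intro a ha
  obtain ⟨lo, hi, hlo, hhi, hbox⟩ :=
    exists_Icc_subset_of_mem_nhds (hV.mem_nhds (hVeq ▸ mem_image_of_mem ρ ha).1)
  obtain ⟨r, hr⟩ := hCbd
  set D := Icc lo hi ∩ C
  have hD : IsDefCompact L M D :=
    ⟨(Defin.Icc hmin.1 lo hi).inter hC, isClosed_Icc.inter hCcl, r, fun p hp => hr p hp.2⟩
  have hDA : D ⊆ ρ '' A := fun y hy => hVeq ▸ ⟨hbox hy.1, hy.2⟩
  set σ := Function.invFunOn ρ A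
  have hK : IsDefCompact L M (σ '' D) :=
    hD.image hmin hfld ((continuousOn_invFunOn_image hρinj hρopen).mono hDA)
      (hD.defin.tupleGraphOn_invFunOn hDA hA hρinj hρdef)
  obtain ⟨U, hU, hUeq⟩ := continuousOn_iff'.mp hρcont (univ.pi fun i => Ioo (lo i) (hi i))
    (isOpen_set_pi finite_univ fun _ _ => isOpen_Ioo)
  obtain ⟨s, hs⟩ := hK.bounded
  refine ⟨σ '' D, hK.defin, ?_, hK.isClosed, ⟨s, fun p hp i => abs_le.mp (hs p hp i)⟩, U, hU,
    (hUeq ▸ ⟨fun i _ => ⟨hlo i, hhi i⟩, ha⟩ : a ∈ U ∩ A).1, fun x hx => ?_⟩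
  · rintro _ ⟨y, hy, rfl⟩
    exact Function.invFunOn_mem (hDA hy)
  · obtain ⟨hxbox, hxA⟩ : x ∈ ρ ⁻¹' _ ∩ A := hUeq ▸ hx
    refine ⟨ρ x, ⟨⟨fun i => (hxbox i trivial).1.le, fun i => (hxbox i trivial).2.le⟩,
      hρC (mem_image_of_mem ρ hxA)⟩, hρinj.leftInvOn_invFunOn hxA⟩

end Compactification

/-- Let `M` be an o-minimal expansion of a real closed field, `A ⊆ Mᵏ` definable, and
`ρ : A → C` a definable compactification of `A` (`C ⊆ Mʰ` definably compact, `ρ` a definable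
homeomorphism onto its image, `ρ(A)` dense in `C`). Then `A` is locally definably compact
iff `ρ(A)` is open in `C`. -/
theorem stmt18 {L : FirstOrder.Language} {M : Type} [L.Structure M]
    [Field M] [LinearOrder M] [IsStrictOrderedRing M] [TopologicalSpace M] [OrderTopology M]
    (hmin : IsOMin L M) (hfld : ExpandsField L M)
    {k h : ℕ} (A : Set (Fin k → M)) (hA : Defin L M A)
    (C : Set (Fin h → M)) (hC : Defin L M C) (hCcl : IsClosed C)
    (hCbd : ∃ r : M, ∀ p ∈ C, ∀ i, |p i| ≤ r)
    (ρ : (Fin k → M) → (Fin h → M))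
    (hρdef : Defin L M
      {p : Fin (k + h) → M |
        ρ (fun i => p (Fin.castAdd h i)) = fun j => p (Fin.natAdd k j)})
    (hρcont : ContinuousOn ρ A) (hρinj : Set.InjOn ρ A)
    (hρopen : ∀ U : Set (Fin k → M), IsOpen U →
      ∃ V : Set (Fin h → M), IsOpen V ∧ ρ '' (U ∩ A) = V ∩ (ρ '' A))
    (hρC : ρ '' A ⊆ C) (hdense : C ⊆ closure (ρ '' A)) :
    LocallyDefCompact L M A ↔ ∃ V : Set (Fin h → M), IsOpen V ∧ ρ '' A = V ∩ C :=
  ⟨exists_isOpen_image_eq_inter_of_locallyDefCompact hmin hfld hρdef hρcont hρopen hρC hdense,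
    fun ⟨_, hV, hVeq⟩ => locallyDefCompact_of_image_eq_inter hmin hfld hA hC hCcl hCbd hρdef
      hρcont hρinj hρopen hρC hV hVeq⟩
end
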